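/- Let 0 < α < 1, n ∈ ℕ_+, and f = D_{2^{2n+1}} − D_{2^{2n}}. There is a constant c > 0 (depending only on α) such that for every integer s with 0 ≤ s ≤ n−1, setting q = 2^{2n} + 2^{2s}, one has for every x ∈ I_{2s} \ I_{2s+1}: |σ_q^α f(x)| ≥ c · 2^{2s(1+α)} / 2^{2αn}. -/

import Mathlib

/-!
The Walsh coefficients of `f = D_{2a} - D_a`, `a = 2^{2n}`, are `1` exactly on `[a, 2a)`, so
`S_k f = ∑_{a ≤ j < k} w_j`. On `I_{2s}` every `w_{a+m}` with `m < N = 2^{2s}` equals `r_{2n}`,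
hence `S_k f(x) = (k - a)₊ r_{2n}(x)` for `k ≤ a + N`, and two summations by parts collapse the
Cesàro sum to `σ_{a+N}^α f(x) = A_{N-1}^{α+1} / A_{a+N}^α · r_{2n}(x)`. Finally
`A_{N-1}^{α+1} = N A_N^α / (α + 1)` and `A_q^α / q^α` is nonincreasing in `q`, which gives
`|σ_{a+N}^α f(x)| ≥ N^{1+α} / ((α + 1) (2a)^α)`.
-/

open MeasureTheory Filter Finset
open scoped ENNReal NNReal

noncomputable section

/-- The dyadic group `G = ∏ Z₂`. -/
abbrev G : Type := ℕ → ZMod 2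

instance : TopologicalSpace (ZMod 2) := ⊥
instance : DiscreteTopology (ZMod 2) := ⟨rfl⟩
instance : MeasurableSpace (ZMod 2) := ⊤
instance : BorelSpace (ZMod 2) := ⟨borel_eq_top_of_discrete.symm⟩
instance : ContinuousAdd (ZMod 2) := ⟨continuous_of_discreteTopology⟩
instance : ContinuousNeg (ZMod 2) := ⟨continuous_of_discreteTopology⟩
instance : IsTopologicalAddGroup (ZMod 2) := ⟨⟩

/-- The normalized Haar measure `μ` on the dyadic group `G`. -/
def μG : Measure G := Measure.addHaarMeasure ⊤

/-- The Rademacher functions `r_k(x) = (-1)^{x_k}`. -/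
def rad (k : ℕ) (x : G) : ℝ := (-1 : ℝ) ^ (x k).val

/-- The Walsh functions `w_n = ∏_k r_k^{n_k}`, where `n = ∑ n_k 2^k`. -/
def walsh (n : ℕ) (x : G) : ℝ := ∏ k ∈ Finset.range n, rad k x ^ (Nat.testBit n k).toNat

/-- The Dirichlet kernels `D_n = ∑_{k=0}^{n-1} w_k`. -/
def dirichlet (n : ℕ) (x : G) : ℝ := ∑ k ∈ Finset.range n, walsh k x

/-- The Fejér kernels `K_n = (1/n) ∑_{k=1}^{n} D_k`. -/
def fejer (n : ℕ) (x : G) : ℝ := (n : ℝ)⁻¹ * ∑ k ∈ Finset.Icc 1 n, dirichlet k x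

/-- The Cesàro numbers `A_n^α = ((α+1)⋯(α+n))/n!`. -/
def cesA (α : ℝ) (n : ℕ) : ℝ := (∏ i ∈ Finset.range n, (α + i + 1)) / n.factorial

/-- The `(C,α)` kernels `K_n^α = (1/A_n^α) ∑_{k=1}^n A_{n-k}^{α-1} D_k`. -/
def cesKernel (α : ℝ) (n : ℕ) (x : G) : ℝ :=
  (cesA α n)⁻¹ * ∑ k ∈ Finset.Icc 1 n, cesA (α - 1) (n - k) * dirichlet k x

/-- Walsh–Fourier coefficients of an integrable function. -/
def walshCoeff (f : G → ℝ) (k : ℕ) : ℝ := ∫ x, f x * walsh k x ∂μG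

/-- Partial sums `S_m f` of the Walsh–Fourier series. -/
def partialSum (f : G → ℝ) (m : ℕ) (x : G) : ℝ :=
  ∑ k ∈ Finset.range m, walshCoeff f k * walsh k x

/-- The `(C,α)` means `σ_n^α f = (1/A_n^α) ∑_{k=1}^n A_{n-k}^{α-1} S_k f`. -/
def cesaroMean (α : ℝ) (f : G → ℝ) (n : ℕ) (x : G) : ℝ :=
  (cesA α n)⁻¹ * ∑ k ∈ Finset.Icc 1 n, cesA (α - 1) (n - k) * partialSum f k x

/-- The dyadic interval `I_n(x)`. -/
def dyadicI (n : ℕ) (x : G) : Set G := {y | ∀ i < n, y i = x i}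

/-- `e_k ∈ G`: the element whose `k`-th coordinate is `1` and all others `0`. -/
def eG (k : ℕ) : G := fun i => if i = k then 1 else 0

/-- The projection onto the first `n` coordinates. -/
def projG (n : ℕ) : G → (Fin n → ZMod 2) := fun x i => x i

/-- The dyadic filtration `ℱ_n`, generated by the dyadic intervals of length `n`. -/
def dyadicF : Filtration ℕ (inferInstance : MeasurableSpace G) where
  seq n := MeasurableSpace.comap (projG n) inferInstance
  mono' := by
    intro n m hnm
    have h : projG n = (fun (y : Fin m → ZMod 2) (i : Fin n) => y (Fin.castLE hnm i)) ∘ projG m :=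
      rfl
    simp only []
    rw [h, ← MeasurableSpace.comap_comp]
    exact MeasurableSpace.comap_mono
      ((measurable_pi_lambda _ fun i => measurable_pi_apply _).comap_le)
  le' := fun n => (measurable_pi_lambda _ fun i => measurable_pi_apply _).comap_le

/-- The Walsh–Fourier coefficients `F̂(k) = lim_n ∫ F_n w_k dμ` of a martingale. -/
def martCoeff (F : ℕ → G → ℝ) (k : ℕ) : ℝ :=
  limUnder atTop (fun n => ∫ x, F n x * walsh k x ∂μG)

/-- Partial sums `S_m F` of the Walsh–Fourier series of a martingale. -/
def martSum (F : ℕ → G → ℝ) (m : ℕ) (x : G) : ℝ :=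
  ∑ k ∈ Finset.range m, martCoeff F k * walsh k x

/-- The `(C,α)` means of a martingale. -/
def martCesaro (α : ℝ) (F : ℕ → G → ℝ) (n : ℕ) (x : G) : ℝ :=
  (cesA α n)⁻¹ * ∑ k ∈ Finset.Icc 1 n, cesA (α - 1) (n - k) * martSum F k x

/-- The `L_p(G)` quasi-norm `(∫ |f|^p dμ)^{1/p}`, valued in `ℝ≥0∞`. -/
def LpNormG (p : ℝ) (f : G → ℝ) : ℝ≥0∞ :=
  (∫⁻ x, ENNReal.ofReal |f x| ^ p ∂μG) ^ (1 / p)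

/-- The Hardy space quasi-norm `‖F‖_{H_p} = ‖sup_n |F_n|‖_p` of a martingale. -/
def hardyNorm (p : ℝ) (F : ℕ → G → ℝ) : ℝ≥0∞ :=
  (∫⁻ x, (⨆ n, ENNReal.ofReal |F n x|) ^ p ∂μG) ^ (1 / p)

/-- The Hardy quasi-norm of an integrable function, via its generated martingale `(E_n f)`. -/
def hardyFnNorm (p : ℝ) (f : G → ℝ) : ℝ≥0∞ :=
  hardyNorm p (fun n => μG[f | dyadicF n])

instance : μG.IsAddRightInvariant := by unfold μG; infer_instance

instance : IsProbabilityMeasure μG :=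
  ⟨by simpa [μG] using
    Measure.addHaarMeasure_self (K₀ := (⊤ : TopologicalSpace.PositiveCompacts G))⟩

lemma abs_rad (k : ℕ) (x : G) : |rad k x| = 1 := abs_neg_one_pow _

lemma rad_mul_self (k : ℕ) (x : G) : rad k x * rad k x = 1 := by
  rw [rad, ← pow_add, ← two_mul, pow_mul, neg_one_sq, one_pow]

lemma rad_add_eG_self (k : ℕ) (x : G) : rad k (x + eG k) = -rad k x := by
  have hk : (x + eG k) k = x k + 1 := by simp [eG]
  rw [rad, rad, hk, neg_one_pow_eq_pow_mod_two, ZMod.val_add, ZMod.val_one, Nat.mod_mod,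
    ← neg_one_pow_eq_pow_mod_two, pow_succ, mul_neg_one]

lemma rad_add_eG_of_ne {j k : ℕ} (h : j ≠ k) (x : G) : rad j (x + eG k) = rad j x := by
  simp [rad, eG, h]

@[simp]
lemma walsh_zero (x : G) : walsh 0 x = 1 := by simp [walsh]

lemma walsh_eq_prod_range {n M : ℕ} (h : n < 2 ^ M) (x : G) :
    walsh n x = ∏ k ∈ range M, rad k x ^ (n.testBit k).toNat := by
  have hmin : n < 2 ^ min n M := by
    rcases min_choice n M with h' | h' <;> rw [h']
    exacts [Nat.lt_two_pow_self, h]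
  have hbit : ∀ k, min n M ≤ k → n.testBit k = false := fun k hk =>
    Nat.testBit_lt_two_pow (hmin.trans_le (Nat.pow_le_pow_right two_pos hk))
  have hprod : ∀ N, min n M ≤ N → ∏ k ∈ range N, rad k x ^ (n.testBit k).toNat =
      ∏ k ∈ range (min n M), rad k x ^ (n.testBit k).toNat := fun N hN =>
    (prod_subset (range_subset_range.2 hN) fun k _ hk => by
      simp [hbit k (not_lt.1 (by simpa using hk))]).symm
  rw [walsh, hprod n (min_le_left n M), hprod M (min_le_right n M)]

lemma walsh_mul_walsh (a b : ℕ) (x : G) : walsh a x * walsh b x = walsh (a ^^^ b) x := by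
  have ha : a < 2 ^ (a + b) := (Nat.le_add_right a b).trans_lt Nat.lt_two_pow_self
  have hb : b < 2 ^ (a + b) := (Nat.le_add_left b a).trans_lt Nat.lt_two_pow_self
  rw [walsh_eq_prod_range ha, walsh_eq_prod_range hb,
    walsh_eq_prod_range (Nat.xor_lt_two_pow ha hb), ← prod_mul_distrib]
  refine prod_congr rfl fun k _ => ?_
  rw [Nat.testBit_xor]
  cases a.testBit k <;> cases b.testBit k <;> simp [rad_mul_self]

lemma abs_walsh (n : ℕ) (x : G) : |walsh n x| = 1 := by
  simp [walsh, abs_prod, abs_rad]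

lemma integrable_walsh (n : ℕ) : Integrable (walsh n) μG := by
  have hmeas : Measurable (walsh n) := Finset.measurable_prod _ fun k _ =>
    ((measurable_from_top (f := fun v : ZMod 2 => (-1 : ℝ) ^ v.val)).comp
      (measurable_pi_apply k)).pow_const _
  exact .of_bound hmeas.aestronglyMeasurable 1 (.of_forall fun x => (abs_walsh n x).le)

lemma walsh_add_eG {n k : ℕ} (hk : n.testBit k = true) (x : G) :
    walsh n (x + eG k) = -walsh n x := by
  have hmem : k ∈ range n := mem_range.2 <|
    Nat.lt_two_pow_self.trans_le (Nat.ge_two_pow_of_testBit hk)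
  rw [walsh, walsh, ← mul_prod_erase _ _ hmem, ← mul_prod_erase _ _ hmem, hk,
    rad_add_eG_self, prod_congr rfl fun j hj => by rw [rad_add_eG_of_ne (ne_of_mem_erase hj)]]
  simp

lemma integral_walsh (n : ℕ) : ∫ x, walsh n x ∂μG = if n = 0 then 1 else 0 := by
  split_ifs with hn
  · simp [hn]
  obtain ⟨k, hk, -⟩ := Nat.exists_most_significant_bit hn
  have h := integral_add_right_eq_self (μ := μG) (walsh n) (eG k)
  simp only [walsh_add_eG hk, integral_neg] at h
  linarith

lemma integral_walsh_mul_walsh (a b : ℕ) :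
    ∫ x, walsh a x * walsh b x ∂μG = if a = b then 1 else 0 := by
  simp_rw [walsh_mul_walsh, integral_walsh, xor_eq_zero_iff]

lemma walshCoeff_dirichlet_sub {a b : ℕ} (hab : a ≤ b) (j : ℕ) :
    walshCoeff (fun y => dirichlet b y - dirichlet a y) j = if j ∈ Ico a b then 1 else 0 := by
  simp_rw [walshCoeff, dirichlet, ← sum_Ico_eq_sub _ hab, sum_mul]
  rw [integral_finsetSum _ fun k _ => by simpa only [walsh_mul_walsh] using integrable_walsh _]
  simp_rw [integral_walsh_mul_walsh, sum_ite_eq']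

lemma partialSum_dirichlet_sub {a b m : ℕ} (hab : a ≤ b) (hmb : m ≤ b) (x : G) :
    partialSum (fun y => dirichlet b y - dirichlet a y) m x = ∑ j ∈ Ico a m, walsh j x := by
  simp_rw [partialSum, walshCoeff_dirichlet_sub hab, ite_mul, one_mul, zero_mul, ← sum_filter]
  congr 1
  ext j
  simp only [mem_filter, mem_range, mem_Ico]
  omega

lemma walsh_two_pow_add {t m : ℕ} (hm : m < 2 ^ t) (x : G) :
    walsh (2 ^ t + m) x = rad t x * walsh m x := by
  have h : 2 ^ t + m < 2 ^ (t + 1) := by rw [pow_succ]; omega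
  rw [walsh_eq_prod_range h, walsh_eq_prod_range (hm.trans (Nat.pow_lt_pow_succ one_lt_two)),
    prod_range_succ, prod_range_succ, Nat.testBit_two_pow_add_eq, Nat.testBit_lt_two_pow hm,
    mul_comm]
  simp only [Bool.not_false, Bool.toNat_true, Bool.toNat_false, pow_one, pow_zero, mul_one]
  congr 1
  exact prod_congr rfl fun k hk => by rw [Nat.testBit_two_pow_add_gt (mem_range.1 hk)]

lemma walsh_eq_one_of_mem_dyadicI {m T : ℕ} (hm : m < 2 ^ T) {x : G} (hx : x ∈ dyadicI T 0) :
    walsh m x = 1 := by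
  rw [walsh_eq_prod_range hm]
  exact prod_eq_one fun k hk => by simp [rad, hx k (mem_range.1 hk)]

@[simp]
lemma cesA_zero (α : ℝ) : cesA α 0 = 1 := by simp [cesA]

lemma cesA_succ (α : ℝ) (n : ℕ) : cesA α (n + 1) = cesA α n * (α + n + 1) / (n + 1) := by
  rw [cesA, cesA, prod_range_succ, Nat.factorial_succ]
  push_cast
  field_simp

lemma cesA_pos {α : ℝ} (hα : -1 < α) (n : ℕ) : 0 < cesA α n :=
  div_pos (prod_pos fun i _ => by linarith [(i.cast_nonneg : (0 : ℝ) ≤ i)]) (by positivity)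

lemma cesA_sub_one_succ (α : ℝ) (n : ℕ) : cesA (α - 1) (n + 1) = cesA α n * α / (n + 1) := by
  rw [cesA, cesA, prod_range_succ', Nat.factorial_succ]
  push_cast
  have hfac : ∀ i : ℕ, α - 1 + (i + 1) + 1 = α + i + 1 := fun i => by ring
  simp only [hfac, add_zero, sub_add_cancel]
  field_simp

lemma cesA_succ_eq_add (α : ℝ) (n : ℕ) :
    cesA α (n + 1) = cesA α n + cesA (α - 1) (n + 1) := by
  rw [cesA_succ, cesA_sub_one_succ]
  field_simp
  ring

lemma sum_range_cesA (β : ℝ) (n : ℕ) : ∑ j ∈ range (n + 1), cesA β j = cesA (β + 1) n := by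
  induction n with
  | zero => simp
  | succ n ih => rw [sum_range_succ, ih, cesA_succ_eq_add (β + 1), add_sub_cancel_right]

lemma sum_range_cesA_mul (β : ℝ) (n : ℕ) :
    ∑ j ∈ range (n + 1), cesA β j * ((n + 1 - j : ℕ) : ℝ) = cesA (β + 2) n := by
  induction n with
  | zero => simp
  | succ n ih =>
    have hsplit : ∀ j ∈ range (n + 2), cesA β j * ((n + 1 + 1 - j : ℕ) : ℝ) =
        cesA β j + cesA β j * ((n + 1 - j : ℕ) : ℝ) := fun j hj => by
      rw [Nat.sub_add_comm (by simpa [Nat.lt_succ_iff] using hj)]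
      push_cast
      ring
    rw [sum_congr rfl hsplit, sum_add_distrib, sum_range_cesA, sum_range_succ _ (n + 1), ih,
      Nat.sub_self, Nat.cast_zero, mul_zero, add_zero, cesA_succ_eq_add (β + 2),
      show β + 2 - 1 = β + 1 by ring, add_comm]

lemma sum_Icc_cesA_mul_tsub (β : ℝ) (a : ℕ) {N : ℕ} (hN : 0 < N) :
    ∑ k ∈ Icc 1 (a + N), cesA β (a + N - k) * ((k - a : ℕ) : ℝ) = cesA (β + 2) (N - 1) := by
  have hreflect : ∑ k ∈ Icc 1 (a + N), cesA β (a + N - k) * ((k - a : ℕ) : ℝ) =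
      ∑ j ∈ range (a + N), cesA β j * ((N - j : ℕ) : ℝ) := by
    refine sum_nbij' (fun k => a + N - k) (fun j => a + N - j) ?_ ?_ ?_ ?_ ?_ <;>
      intro k hk <;> simp only [mem_Icc, mem_range] at hk ⊢
    · omega
    · omega
    · omega
    · omega
    · rw [show N - (a + N - k) = k - a by omega]
  obtain ⟨n, rfl⟩ : ∃ n, N = n + 1 := ⟨N - 1, by omega⟩
  rw [hreflect, ← sum_range_cesA_mul, Nat.add_sub_cancel]
  refine (sum_subset (range_subset_range.2 (by omega)) fun j _ hj => ?_).symm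
  simp [Nat.sub_eq_zero_of_le (not_lt.1 (mem_range.not.1 hj))]

lemma one_add_div_mul_rpow_le {α t : ℝ} (hα : 0 ≤ α) (ht : 0 < t) :
    (1 + α / (t + 1)) * t ^ α ≤ (t + 1) ^ α := by
  have hlog : 1 / (t + 1) ≤ Real.log ((t + 1) / t) := by
    have h := Real.one_sub_inv_le_log_of_pos (show 0 < (t + 1) / t by positivity)
    rwa [inv_div, one_sub_div (by positivity), add_sub_cancel_left] at h
  calc (1 + α / (t + 1)) * t ^ α
      ≤ Real.exp (1 / (t + 1)) ^ α * t ^ α := by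
        rw [← Real.exp_mul, one_div_mul_eq_div, add_comm]
        gcongr
        exact Real.add_one_le_exp _
    _ ≤ ((t + 1) / t) ^ α * t ^ α := by
        gcongr
        exact (Real.exp_le_exp.2 hlog).trans_eq (Real.exp_log (by positivity))
    _ = (t + 1) ^ α := by
        rw [Real.div_rpow (by positivity) ht.le, div_mul_cancel₀ _ (by positivity)]

lemma cesA_mul_rpow_le {α : ℝ} (hα : 0 ≤ α) {N q : ℕ} (hN : 0 < N) (hNq : N ≤ q) :
    cesA α q * (N : ℝ) ^ α ≤ cesA α N * (q : ℝ) ^ α := by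
  induction q, hNq using Nat.le_induction with
  | base => rfl
  | succ q hNq ih =>
    have hq : (0 : ℝ) < q := by exact_mod_cast hN.trans_le hNq
    have hstep : cesA α (q + 1) = cesA α q * (1 + α / (q + 1)) := by
      rw [cesA_succ]
      field_simp
      ring
    calc cesA α (q + 1) * (N : ℝ) ^ α
        = cesA α q * (N : ℝ) ^ α * (1 + α / (q + 1)) := by rw [hstep]; ring
      _ ≤ cesA α N * (q : ℝ) ^ α * (1 + α / (q + 1)) := by gcongr
      _ = cesA α N * ((1 + α / (q + 1)) * (q : ℝ) ^ α) := by ring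
      _ ≤ cesA α N * ((q + 1 : ℕ) : ℝ) ^ α := by
        push_cast
        exact mul_le_mul_of_nonneg_left (one_add_div_mul_rpow_le hα hq)
          (cesA_pos (by linarith) N).le

lemma cesaroMean_dirichlet_sub_of_walsh_eq (α : ℝ) {a b N : ℕ} (hN : 0 < N) (hb : a + N ≤ b)
    {x : G} {r : ℝ} (hw : ∀ j ∈ Ico a (a + N), walsh j x = r) :
    cesaroMean α (fun y => dirichlet b y - dirichlet a y) (a + N) x =
      cesA (α + 1) (N - 1) / cesA α (a + N) * r := by
  -- the truncated `k - a` is `0` for `k ≤ a`, matching `S_k f = 0` there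
  have hS : ∀ k ∈ Icc 1 (a + N),
      partialSum (fun y => dirichlet b y - dirichlet a y) k x = ((k - a : ℕ) : ℝ) * r := by
    intro k hk
    rw [mem_Icc] at hk
    rw [partialSum_dirichlet_sub (by omega) (by omega),
      sum_congr rfl fun j hj => hw j (by rw [mem_Ico] at hj ⊢; omega), sum_const, Nat.card_Ico,
      nsmul_eq_mul]
  rw [cesaroMean, sum_congr rfl fun k hk => by rw [hS k hk, ← mul_assoc], ← sum_mul,
    sum_Icc_cesA_mul_tsub _ _ hN, show α - 1 + 2 = α + 1 by ring]
  ring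

lemma rpow_div_le_cesA_div {α : ℝ} (hα : 0 ≤ α) {N q : ℕ} (hN : 0 < N) (hNq : N ≤ q) :
    (N : ℝ) ^ (1 + α) / ((α + 1) * (q : ℝ) ^ α) ≤ cesA (α + 1) (N - 1) / cesA α q := by
  have hA : cesA (α + 1) (N - 1) = N * cesA α N / (α + 1) := by
    have h := cesA_sub_one_succ (α + 1) (N - 1)
    rw [add_sub_cancel_right, Nat.sub_add_cancel hN, Nat.cast_pred hN, sub_add_cancel] at h
    rw [h]
    field_simp
  have hq : (0 : ℝ) < q := by exact_mod_cast hN.trans_le hNq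
  rw [hA, div_le_div_iff₀ (by positivity) (cesA_pos (by linarith) q),
    Real.rpow_add (by exact_mod_cast hN), Real.rpow_one]
  calc (N : ℝ) * N ^ α * cesA α q = N * (cesA α q * N ^ α) := by ring
    _ ≤ N * (cesA α N * q ^ α) :=
      mul_le_mul_of_nonneg_left (cesA_mul_rpow_le hα hN hNq) (Nat.cast_nonneg N)
    _ = N * cesA α N / (α + 1) * ((α + 1) * q ^ α) := by field_simp

theorem statement16_general (α : ℝ) (hα0 : 0 < α) :
    ∃ c : ℝ, 0 < c ∧ ∀ n : ℕ, 1 ≤ n → ∀ s : ℕ, s ≤ n - 1 →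
      ∀ x ∈ dyadicI (2 * s) 0 \ dyadicI (2 * s + 1) 0,
        c * (2 : ℝ) ^ ((2 * (s : ℝ)) * (1 + α)) / (2 : ℝ) ^ (2 * α * (n : ℝ)) ≤
          |cesaroMean α (fun y => dirichlet (2 ^ (2 * n + 1)) y - dirichlet (2 ^ (2 * n)) y)
            (2 ^ (2 * n) + 2 ^ (2 * s)) x| := by
  refine ⟨((α + 1) * 2 ^ α)⁻¹, by positivity, fun n hn s hs x hx => ?_⟩
  set a := 2 ^ (2 * n)
  set N := 2 ^ (2 * s)
  have hN : 0 < N := by positivity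
  have hNa : N ≤ a := Nat.pow_le_pow_right two_pos (by omega)
  have hw : ∀ j ∈ Ico a (a + N), walsh j x = rad (2 * n) x := fun j hj => by
    obtain ⟨haj, hjN⟩ := mem_Ico.1 hj
    obtain ⟨m, rfl⟩ := exists_add_of_le haj
    rw [walsh_two_pow_add (by omega), walsh_eq_one_of_mem_dyadicI (by omega) hx.1, mul_one]
  rw [cesaroMean_dirichlet_sub_of_walsh_eq α hN (by rw [pow_succ]; omega) hw, abs_mul, abs_rad,
    mul_one, abs_of_pos (div_pos (cesA_pos (by linarith) _) (cesA_pos (by linarith) _))]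
  have hNpow : (2 : ℝ) ^ (2 * (s : ℝ) * (1 + α)) = (N : ℝ) ^ (1 + α) := by
    rw [Real.rpow_mul zero_le_two]; norm_cast
  have hapow : (2 : ℝ) ^ (2 * α * (n : ℝ)) = (a : ℝ) ^ α := by
    rw [mul_right_comm, Real.rpow_mul zero_le_two]; norm_cast
  calc ((α + 1) * 2 ^ α)⁻¹ * 2 ^ (2 * (s : ℝ) * (1 + α)) / 2 ^ (2 * α * (n : ℝ))
      = (N : ℝ) ^ (1 + α) / ((α + 1) * (2 * (a : ℝ)) ^ α) := by
        rw [hNpow, hapow, Real.mul_rpow zero_le_two (Nat.cast_nonneg _)]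
        field_simp
    _ ≤ (N : ℝ) ^ (1 + α) / ((α + 1) * ((a + N : ℕ) : ℝ) ^ α) := by
        gcongr
        exact_mod_cast (by omega : a + N ≤ 2 * a)
    _ ≤ cesA (α + 1) (N - 1) / cesA α (a + N) := rpow_div_le_cesA_div hα0.le hN (by omega)

/-- lower bound `|σ_q^α f(x)| ≥ c 2^{2s(1+α)} / 2^{2αn}` on `I_{2s} \ I_{2s+1}`,
with `f = D_{2^{2n+1}} - D_{2^{2n}}` and `q = 2^{2n} + 2^{2s}`. -/
theorem statement16 (α : ℝ) (hα0 : 0 < α) (hα1 : α < 1) :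
    ∃ c : ℝ, 0 < c ∧ ∀ n : ℕ, 1 ≤ n → ∀ s : ℕ, s ≤ n - 1 →
      ∀ x ∈ dyadicI (2 * s) 0 \ dyadicI (2 * s + 1) 0,
        c * (2 : ℝ) ^ ((2 * (s : ℝ)) * (1 + α)) / (2 : ℝ) ^ (2 * α * (n : ℝ)) ≤
          |cesaroMean α (fun y => dirichlet (2 ^ (2 * n + 1)) y - dirichlet (2 ^ (2 * n)) y)
            (2 ^ (2 * n) + 2 ^ (2 * s)) x| :=
  statement16_general α hα0
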